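/- arXiv:1409.0271 — 5 statements merged into one kernel-verified Lean document; each statement's English description precedes it below -/
import Mathlib

section
/- Let F, P : ℝ → ℝ be continuous strictly increasing bijections with F(x) > P(x) for all x. Then there exists a continuous strictly increasing bijection r : ℝ → ℝ such that (r ∘ F)(x) − (r ∘ P)(x) = 2a for a fixed constant a > 0 and all x ∈ ℝ. -/
open Filter Topology Function Set

/-! Put `g = F ∘ P⁻¹`, an order automorphism of `ℝ` with `y < g y`. A bounded forward orbit of `g`
would converge to a fixed point, so all orbits are unbounded in both directions and each meets the
fundamental domain `[0, g 0)` exactly once: every `y` is `gⁿ s` for unique `n : ℤ` and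
`s ∈ [0, g 0)`. Then `r (gⁿ s) = n + s / g 0` is an order automorphism with `r ∘ g = r + 1`, so
`r (F x) - r (P x) = r (g (P x)) - r (P x) = 1`. -/

theorem exists_lt_iterate_of_forall_lt_self {α : Type*} [ConditionallyCompleteLinearOrder α]
    [TopologicalSpace α] [OrderTopology α] {f : α → α} (hf : Continuous f)
    (hlt : ∀ y, y < f y) (x y : α) : ∃ k : ℕ, y < f^[k] x := by
  by_contra! hbdd
  have hmono : Monotone fun k => f^[k] x :=
    monotone_nat_of_le_succ fun k => by rw [iterate_succ_apply']; exact (hlt _).le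
  have hL : Tendsto (fun k => f^[k] x) atTop (𝓝 (⨆ k, f^[k] x)) :=
    tendsto_atTop_ciSup hmono ⟨y, by rintro _ ⟨k, rfl⟩; exact hbdd k⟩
  have hfL : Tendsto (fun k => f^[k + 1] x) atTop (𝓝 (f (⨆ k, f^[k] x))) := by
    simpa only [comp_def, iterate_succ_apply'] using (hf.tendsto _).comp hL
  exact (hlt _).ne' (tendsto_nhds_unique hfL (hL.comp (tendsto_add_atTop_nat 1)))

theorem StrictMono.existsUnique_le_lt_add_one {α : Type*} [LinearOrder α] {f : ℤ → α}
    (hf : StrictMono f) (hbot : ∀ y, ∃ n, f n ≤ y) (htop : ∀ y, ∃ n, y < f n) (y : α) :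
    ∃! n : ℤ, f n ≤ y ∧ y < f (n + 1) := by
  obtain ⟨m, hm⟩ := htop y
  obtain ⟨n, hn, hmax⟩ := Int.exists_greatest_of_bdd
    ⟨m, fun k hk => (hf.lt_iff_lt.1 (hk.trans_lt hm)).le⟩ (hbot y)
  refine ⟨n, ⟨hn, lt_of_not_ge fun h => (hmax _ h).not_gt (lt_add_one n)⟩, fun k hk => ?_⟩
  have hkn : k ≤ n := hmax k hk.1
  have hnk : n < k + 1 := hf.lt_iff_lt.1 (hn.trans_lt hk.2)
  omega

namespace RelIso

variable {α : Type*} {r : α → α → Prop}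

theorem coe_pow (e : r ≃r r) (n : ℕ) : ⇑(e ^ n) = (⇑e)^[n] := by
  induction n with
  | zero => rfl
  | succ n ih => rw [pow_succ', coe_mul, ih, iterate_succ']

theorem zpow_apply_zpow_apply (e : r ≃r r) (m n : ℤ) (x : α) :
    (e ^ m) ((e ^ n) x) = (e ^ (m + n)) x := by
  rw [zpow_add, mul_apply]

end RelIso

namespace OrderIso

open RelIso

theorem strictMono_zpow_apply {α : Type*} [Preorder α] {g : α ≃o α} (hg : ∀ y, y < g y)
    (x : α) : StrictMono fun n : ℤ => (g ^ n) x :=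
  strictMono_int_of_lt_succ fun n => by
    rw [add_comm, zpow_one_add, mul_apply]
    exact hg _

theorem exists_lt_pow_apply {α : Type*} [ConditionallyCompleteLinearOrder α] [TopologicalSpace α]
    [OrderTopology α] {g : α ≃o α} (hg : ∀ y, y < g y) (x y : α) : ∃ n : ℕ, y < (g ^ n) x := by
  simpa only [coe_pow] using exists_lt_iterate_of_forall_lt_self g.continuous hg x y

variable {g : ℝ ≃o ℝ}

theorem existsUnique_zpow_neg_apply_mem_Ico (hg : ∀ y, y < g y) (y : ℝ) :
    ∃! n : ℤ, (g ^ (-n)) y ∈ Ico 0 (g 0) := by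
  have hbot : ∀ y, ∃ n : ℤ, (g ^ n) 0 ≤ y := fun y => by
    obtain ⟨k, hk⟩ := exists_lt_pow_apply hg y 0
    refine ⟨-k, ?_⟩
    simpa [zpow_apply_zpow_apply] using ((g ^ (-(k : ℤ))).strictMono hk).le
  have htop : ∀ y, ∃ n : ℤ, y < (g ^ n) 0 := fun y => by
    obtain ⟨k, hk⟩ := exists_lt_pow_apply hg 0 y
    exact ⟨k, by simpa using hk⟩
  convert (strictMono_zpow_apply hg 0).existsUnique_le_lt_add_one hbot htop y using 3 with n
  rw [mem_Ico, ← (g ^ (-n)).le_iff_le (x := (g ^ n) 0),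
    ← (g ^ (-n)).lt_iff_lt (y := (g ^ (n + 1)) 0), zpow_apply_zpow_apply, zpow_apply_zpow_apply]
  simp

noncomputable def orbitIndex (hg : ∀ y, y < g y) (y : ℝ) : ℤ :=
  (existsUnique_zpow_neg_apply_mem_Ico hg y).exists.choose

theorem zpow_neg_orbitIndex_apply_mem (hg : ∀ y, y < g y) (y : ℝ) :
    (g ^ (-orbitIndex hg y)) y ∈ Ico 0 (g 0) :=
  (existsUnique_zpow_neg_apply_mem_Ico hg y).exists.choose_spec

theorem orbitIndex_zpow_apply (hg : ∀ y, y < g y) (n : ℤ) {s : ℝ} (hs : s ∈ Ico 0 (g 0)) :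
    orbitIndex hg ((g ^ n) s) = n :=
  (existsUnique_zpow_neg_apply_mem_Ico hg _).unique (zpow_neg_orbitIndex_apply_mem hg _)
    (by simpa using hs)

theorem exists_zpow_apply_eq (hg : ∀ y, y < g y) (y : ℝ) :
    ∃ n : ℤ, ∃ s ∈ Ico 0 (g 0), (g ^ n) s = y :=
  ⟨orbitIndex hg y, _, zpow_neg_orbitIndex_apply_mem hg y, by simp⟩

theorem zpow_apply_lt_zpow_apply (hg : ∀ y, y < g y) {m n : ℤ} (hmn : m < n) {s t : ℝ}
    (hs : s ∈ Ico 0 (g 0)) (ht : 0 ≤ t) : (g ^ m) s < (g ^ n) t :=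
  calc (g ^ m) s < (g ^ m) (g 0) := (g ^ m).strictMono hs.2
    _ = (g ^ (m + 1)) 0 := by rw [zpow_add_one, mul_apply]
    _ ≤ (g ^ n) 0 := (strictMono_zpow_apply hg 0).monotone hmn
    _ ≤ (g ^ n) t := (g ^ n).monotone ht

noncomputable def linearization (hg : ∀ y, y < g y) (y : ℝ) : ℝ :=
  orbitIndex hg y + (g ^ (-orbitIndex hg y)) y / g 0

theorem linearization_zpow_apply (hg : ∀ y, y < g y) (n : ℤ) {s : ℝ} (hs : s ∈ Ico 0 (g 0)) :
    linearization hg ((g ^ n) s) = n + s / g 0 := by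
  simp [linearization, orbitIndex_zpow_apply hg n hs]

theorem linearization_strictMono (hg : ∀ y, y < g y) : StrictMono (linearization hg) := by
  intro y z hyz
  obtain ⟨m, s, hs, rfl⟩ := exists_zpow_apply_eq hg y
  obtain ⟨n, t, ht, rfl⟩ := exists_zpow_apply_eq hg z
  rw [linearization_zpow_apply hg m hs, linearization_zpow_apply hg n ht]
  rcases lt_trichotomy m n with hmn | rfl | hnm
  · have hs₁ : s / g 0 < 1 := (div_lt_one (hg 0)).2 hs.2
    have ht₀ : 0 ≤ t / g 0 := div_nonneg ht.1 (hg 0).le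
    have hmn' : (m : ℝ) + 1 ≤ n := by exact_mod_cast hmn
    linarith
  · have := hg 0
    gcongr
    exact (g ^ m).lt_iff_lt.1 hyz
  · exact absurd hyz (zpow_apply_lt_zpow_apply hg hnm ht hs.1).not_gt

theorem linearization_surjective (hg : ∀ y, y < g y) : Surjective (linearization hg) := by
  intro t
  have hs : Int.fract t * g 0 ∈ Ico 0 (g 0) :=
    ⟨mul_nonneg (Int.fract_nonneg t) (hg 0).le, mul_lt_of_lt_one_left (hg 0) (Int.fract_lt_one t)⟩
  refine ⟨(g ^ ⌊t⌋) (Int.fract t * g 0), ?_⟩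
  rw [linearization_zpow_apply hg _ hs, mul_div_cancel_right₀ _ (hg 0).ne', Int.floor_add_fract]

theorem linearization_apply (hg : ∀ y, y < g y) (y : ℝ) :
    linearization hg (g y) = linearization hg y + 1 := by
  obtain ⟨n, s, hs, rfl⟩ := exists_zpow_apply_eq hg y
  rw [← mul_apply, ← zpow_one_add, linearization_zpow_apply hg _ hs,
    linearization_zpow_apply hg _ hs]
  push_cast
  ring

theorem exists_semiconj_add_one (hg : ∀ y, y < g y) :
    ∃ r : ℝ ≃o ℝ, Semiconj r g (· + 1) :=
  ⟨(linearization_strictMono hg).orderIsoOfSurjective _ (linearization_surjective hg),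
    linearization_apply hg⟩

end OrderIso

theorem stmt_2_general (F P : ℝ → ℝ)
    (hFm : StrictMono F) (hFb : Function.Bijective F)
    (hPm : StrictMono P) (hPb : Function.Bijective P)
    (hFP : ∀ x, F x > P x) :
    ∃ (r : ℝ → ℝ) (a : ℝ), 0 < a ∧ Continuous r ∧ StrictMono r ∧
      Function.Bijective r ∧ ∀ x, r (F x) - r (P x) = 2 * a := by
  let eP := hPm.orderIsoOfSurjective P hPb.2
  let g : ℝ ≃o ℝ := eP.symm.trans (hFm.orderIsoOfSurjective F hFb.2)
  have hgP : ∀ x, g (P x) = F x := fun x => congrArg F (eP.symm_apply_apply x)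
  have hPeP : ∀ y, P (eP.symm y) = y := eP.apply_symm_apply
  have hg : ∀ y, y < g y := fun y => by
    simpa only [← hgP, hPeP] using hFP (eP.symm y)
  obtain ⟨r, hr⟩ := OrderIso.exists_semiconj_add_one hg
  refine ⟨r, 1 / 2, one_half_pos, r.continuous, r.strictMono, r.bijective, fun x => ?_⟩
  rw [← hgP, hr.eq]
  ring

/-- Key step in equivalence of 2-worldline 2IRs: any pair of continuous strictly
increasing bijections F > P of ℝ can be reparameterised to constant separation 2a. -/
theorem stmt_2 (F P : ℝ → ℝ)
    (hFc : Continuous F) (hFm : StrictMono F) (hFb : Function.Bijective F)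
    (hPc : Continuous P) (hPm : StrictMono P) (hPb : Function.Bijective P)
    (hFP : ∀ x, F x > P x) :
    ∃ (r : ℝ → ℝ) (a : ℝ), 0 < a ∧ Continuous r ∧ StrictMono r ∧
      Function.Bijective r ∧ ∀ x, r (F x) - r (P x) = 2 * a :=
  stmt_2_general F P hFm hFb hPm hPb hFP
end

section
/- All 2-worldline 2IRs are equivalent: given continuous strictly increasing bijections F, P : ℝ → ℝ with F > P pointwise, there exist continuous strictly increasing bijections r, s : ℝ → ℝ such that r ∘ F ∘ s = (· + a) and r ∘ P ∘ s = (· − a) for some constant a > 0. -/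
/-!
Writing `F = E ∘ P` with `E := F ∘ P⁻¹`, the hypothesis `F > P` says exactly that `E x > x`
for every `x`. A fixed-point-free increasing homeomorphism of `ℝ` is conjugate to `t ↦ t + 1`:
its orbit `Eⁿ 0`, `n ∈ ℤ`, is unbounded in both directions (a limit would be a fixed point), so
the intervals `[Eⁿ 0, Eⁿ⁺¹ 0)` tile `ℝ`, and `t ↦ E^⌊t⌋ (fract t · E 0)` is an order isomorphism
`h` with `h (t + 1) = E (h t)`. Then `r := h⁻¹` and `s := P⁻¹ ∘ h ∘ (· - 1/2)` conjugate `F` and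
`P` to `x ↦ x + 1/2` and `x ↦ x - 1/2`.
-/

open Set Filter Topology

theorem Monotone.exists_le_and_lt_add_one {α : Type*} [LinearOrder α] {c : ℤ → α}
    (hc : Monotone c) (hTop : ¬BddAbove (range c)) (hBot : ¬BddBelow (range c)) (x : α) :
    ∃ n, c n ≤ x ∧ x < c (n + 1) := by
  obtain ⟨_, ⟨M, rfl⟩, hM⟩ := not_bddAbove_iff.1 hTop x
  obtain ⟨_, ⟨m, rfl⟩, hm⟩ := not_bddBelow_iff.1 hBot x
  obtain ⟨n, hn, hmax⟩ := Int.exists_greatest_of_bdd (P := fun n => c n ≤ x)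
    ⟨M, fun k hk => le_of_not_gt fun hMk => (hM.trans_le (hc hMk.le)).not_ge hk⟩ ⟨m, hm.le⟩
  refine ⟨n, hn, lt_of_not_ge fun h => ?_⟩
  have := hmax _ h
  omega

namespace OrderIso

section Preorder

variable {α : Type*} [Preorder α] {E : α ≃o α}

variable (E) in
theorem zpow_add_one_apply (n : ℤ) (x : α) : (E ^ (n + 1)) x = E ((E ^ n) x) := by
  rw [add_comm, zpow_one_add]
  rfl

theorem strictMono_zpow_apply_s3 (hE : ∀ x, x < E x) (x : α) : StrictMono fun n : ℤ => (E ^ n) x :=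
  strictMono_int_of_lt_succ fun n => by
    simp only [zpow_add_one_apply]
    exact hE _

end Preorder

section OrderTopology

variable {α : Type*} [ConditionallyCompleteLinearOrder α] [TopologicalSpace α] [OrderTopology α]
  {E : α ≃o α}

theorem apply_eq_of_tendsto_zpow_apply {L : Filter ℤ} [L.NeBot] (hL : Tendsto (· + 1) L L)
    {x l : α} (h : Tendsto (fun n => (E ^ n) x) L (𝓝 l)) : E l = l :=
  tendsto_nhds_unique ((E.continuous.tendsto l).comp h)
    (by simpa only [Function.comp_def, zpow_add_one_apply] using h.comp hL)

theorem not_bddAbove_range_zpow_apply (hE : ∀ x, x < E x) (x : α) :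
    ¬BddAbove (range fun n : ℤ => (E ^ n) x) :=
  fun hb => (hE _).ne' <| apply_eq_of_tendsto_zpow_apply (tendsto_atTop_add_const_right _ 1
    tendsto_id) (tendsto_atTop_ciSup (strictMono_zpow_apply_s3 hE x).monotone hb)

theorem not_bddBelow_range_zpow_apply (hE : ∀ x, x < E x) (x : α) :
    ¬BddBelow (range fun n : ℤ => (E ^ n) x) :=
  fun hb => (hE _).ne' <| apply_eq_of_tendsto_zpow_apply (tendsto_atBot_add_const_right _ 1
    tendsto_id) (tendsto_atBot_ciInf (strictMono_zpow_apply_s3 hE x).monotone hb)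

end OrderTopology

variable {E : ℝ ≃o ℝ}

variable (E) in
noncomputable def orbitInterp (t : ℝ) : ℝ := (E ^ ⌊t⌋) (Int.fract t * E 0)

variable (E) in
theorem orbitInterp_add_one (t : ℝ) : orbitInterp E (t + 1) = E (orbitInterp E t) := by
  simp only [orbitInterp, Int.floor_add_one, Int.fract_add_one, zpow_add_one_apply]

theorem zpow_floor_apply_zero_le_orbitInterp (hE : ∀ x, x < E x) (t : ℝ) :
    (E ^ ⌊t⌋) 0 ≤ orbitInterp E t :=
  (E ^ ⌊t⌋).monotone (mul_nonneg (Int.fract_nonneg t) (hE 0).le)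

theorem orbitInterp_lt_zpow_floor_add_one_apply_zero (hE : ∀ x, x < E x) (t : ℝ) :
    orbitInterp E t < (E ^ (⌊t⌋ + 1)) 0 := by
  rw [zpow_add_one]
  exact (E ^ ⌊t⌋).strictMono (mul_lt_of_lt_one_left (hE 0) (Int.fract_lt_one t))

theorem strictMono_orbitInterp (hE : ∀ x, x < E x) : StrictMono (orbitInterp E) := by
  intro t t' htt'
  rcases (Int.floor_mono htt'.le).eq_or_lt with hfl | hfl
  · have hfract : Int.fract t < Int.fract t' := by
      rw [Int.fract, Int.fract, hfl]
      linarith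
    simp only [orbitInterp, hfl]
    exact (E ^ ⌊t'⌋).strictMono (mul_lt_mul_of_pos_right hfract (hE 0))
  · calc orbitInterp E t
        < (E ^ (⌊t⌋ + 1)) 0 := orbitInterp_lt_zpow_floor_add_one_apply_zero hE t
      _ ≤ (E ^ ⌊t'⌋) 0 := (strictMono_zpow_apply_s3 hE 0).monotone hfl
      _ ≤ orbitInterp E t' := zpow_floor_apply_zero_le_orbitInterp hE t'

theorem surjective_orbitInterp (hE : ∀ x, x < E x) : Function.Surjective (orbitInterp E) := by
  intro x
  obtain ⟨n, hn, hn'⟩ := (strictMono_zpow_apply_s3 hE 0).monotone.exists_le_and_lt_add_one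
    (not_bddAbove_range_zpow_apply hE 0) (not_bddBelow_range_zpow_apply hE 0) x
  set y := (E ^ n)⁻¹ x
  have hy : 0 ≤ y := by simpa only [RelIso.inv_apply_self] using (E ^ n)⁻¹.monotone hn
  have hy' : y < E 0 := by
    simpa only [zpow_add_one, RelIso.mul_apply, RelIso.inv_apply_self] using
      (E ^ n)⁻¹.strictMono hn'
  have hfract : y / E 0 ∈ Ico (0 : ℝ) 1 :=
    ⟨div_nonneg hy (hE 0).le, (div_lt_one (hE 0)).2 hy'⟩
  refine ⟨n + y / E 0, ?_⟩
  simp only [orbitInterp, Int.floor_intCast_add, Int.fract_intCast_add,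
    Int.floor_eq_zero_iff.2 hfract, Int.fract_eq_self.2 hfract, add_zero,
    div_mul_cancel₀ _ (hE 0).ne', y, RelIso.apply_inv_self]

theorem exists_semiconj_add_one_s3 (hE : ∀ x, x < E x) :
    ∃ h : ℝ ≃o ℝ, Function.Semiconj h (· + 1) E :=
  ⟨(strictMono_orbitInterp hE).orderIsoOfSurjective _ (surjective_orbitInterp hE),
    orbitInterp_add_one E⟩

end OrderIso

theorem stmt_3_general (F P : ℝ → ℝ)
    (hFm : StrictMono F) (hFb : Function.Bijective F)
    (hPm : StrictMono P) (hPb : Function.Bijective P)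
    (hFP : ∀ x, F x > P x) :
    ∃ (r s : ℝ → ℝ) (a : ℝ), 0 < a ∧
      Continuous r ∧ StrictMono r ∧ Function.Bijective r ∧
      Continuous s ∧ StrictMono s ∧ Function.Bijective s ∧
      (∀ x, r (F (s x)) = x + a) ∧ (∀ x, r (P (s x)) = x - a) := by
  set Φ := hFm.orderIsoOfSurjective F hFb.2
  set Ψ := hPm.orderIsoOfSurjective P hPb.2
  have hE : ∀ x, x < (Ψ.symm.trans Φ) x := fun x =>
    (Ψ.apply_symm_apply x).symm.trans_lt (hFP (Ψ.symm x))
  obtain ⟨h, hh⟩ := OrderIso.exists_semiconj_add_one_s3 hE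
  set s := (OrderIso.addRight (-(1 / 2) : ℝ)).trans (h.trans Ψ.symm)
  have hPs : ∀ x, P (s x) = h (x - 1 / 2) := fun x => Ψ.apply_symm_apply _
  refine ⟨h.symm, s, 1 / 2, one_half_pos, h.symm.continuous, h.symm.strictMono, h.symm.bijective,
    s.continuous, s.strictMono, s.bijective, fun x => ?_, fun x => ?_⟩
  · have hFs : F (s x) = (Ψ.symm.trans Φ) (P (s x)) := congrArg Φ (Ψ.symm_apply_apply _).symm
    rw [hFs, hPs, ← hh.eq, h.symm_apply_apply]
    ring
  · rw [hPs, h.symm_apply_apply]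

/-- All 2-worldline 2IRs are equivalent: F and P can be conjugated into the
standard forms x ↦ x + a and x ↦ x − a. -/
theorem stmt_3 (F P : ℝ → ℝ)
    (hFc : Continuous F) (hFm : StrictMono F) (hFb : Function.Bijective F)
    (hPc : Continuous P) (hPm : StrictMono P) (hPb : Function.Bijective P)
    (hFP : ∀ x, F x > P x) :
    ∃ (r s : ℝ → ℝ) (a : ℝ), 0 < a ∧
      Continuous r ∧ StrictMono r ∧ Function.Bijective r ∧
      Continuous s ∧ StrictMono s ∧ Function.Bijective s ∧
      (∀ x, r (F (s x)) = x + a) ∧ (∀ x, r (P (s x)) = x - a) :=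
  stmt_3_general F P hFm hFb hPm hPb hFP
end

section
/- Let W_i, W_j, W_k be timelike curves in Minkowski space ℝ^{1,3} (curves whose tangent vectors are everywhere timelike, parameterised by strictly increasing time coordinate), and for points q, define p_ki(q) ∈ W_k as the unique intersection of the past light cone of q ∈ W_i with W_k. Then for any point λ_i on W_i: p_kj(p_ji(λ_i)) ≤ p_ki(λ_i), where ≤ is the ordering along W_k. -/
/-- Locality condition for embeddable 2IRs: for timelike curves (parameterised by
time, with spatial part moving slower than light) in Minkowski space, with past
light-cone intersection functions p_ji, p_ki, p_kj, we have
p_kj ∘ p_ji ≤ p_ki pointwise. -/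
theorem stmt_5 (wi wj wk : ℝ → EuclideanSpace ℝ (Fin 3))
    (hwi : ∀ s t : ℝ, s < t → dist (wi s) (wi t) < t - s)
    (hwj : ∀ s t : ℝ, s < t → dist (wj s) (wj t) < t - s)
    (hwk : ∀ s t : ℝ, s < t → dist (wk s) (wk t) < t - s)
    (pji pki pkj : ℝ → ℝ)
    (hpji : ∀ t, pji t < t ∧ dist (wj (pji t)) (wi t) = t - pji t)
    (hpki : ∀ t, pki t < t ∧ dist (wk (pki t)) (wi t) = t - pki t)
    (hpkj : ∀ t, pkj t < t ∧ dist (wk (pkj t)) (wj t) = t - pkj t) :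
    ∀ t, pkj (pji t) ≤ pki t := by
  intro t
  by_contra h
  push_neg at h
  set s := pji t with hs
  obtain ⟨h1, h2⟩ := hpji t
  obtain ⟨h3, h4⟩ := hpki t
  obtain ⟨h5, h6⟩ := hpkj s
  have htri : dist (wk (pkj s)) (wi t) ≤ dist (wk (pkj s)) (wj s) + dist (wj s) (wi t) :=
    dist_triangle _ _ _
  have hk : dist (wk (pki t)) (wk (pkj s)) < pkj s - pki t := hwk _ _ h
  have htri2 : dist (wk (pki t)) (wi t) ≤ dist (wk (pki t)) (wk (pkj s)) + dist (wk (pkj s)) (wi t) :=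
    dist_triangle _ _ _
  linarith
end

section
/- In Minkowski space, if q' lies on the past light cone of q (q' ≠ q), then the past light cone of q' is contained in the closed causal past of q; moreover any point of the past light cone of q' that also lies on the past light cone of q lies on the null geodesic through q and q'. -/
/-- If q' lies on the past light cone of q, then the past light cone of q' is
contained in the closed causal past of q, and any point on both past light cones
lies on the null line through q and q'. Points of Minkowski space are pairs
(time, space) in ℝ × EuclideanSpace ℝ (Fin 3). -/
theorem stmt_6 (q q' : ℝ × EuclideanSpace ℝ (Fin 3)) (hne : q' ≠ q)
    (hq't : q'.1 < q.1) (hq'null : dist q'.2 q.2 = q.1 - q'.1) :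
    (∀ x : ℝ × EuclideanSpace ℝ (Fin 3),
        (x.1 < q'.1 ∧ dist x.2 q'.2 = q'.1 - x.1) →
        (x.1 ≤ q.1 ∧ dist x.2 q.2 ≤ q.1 - x.1)) ∧
    (∀ x : ℝ × EuclideanSpace ℝ (Fin 3),
        (x.1 < q'.1 ∧ dist x.2 q'.2 = q'.1 - x.1) →
        (x.1 < q.1 ∧ dist x.2 q.2 = q.1 - x.1) →
        ∃ s : ℝ, x = q + s • (q' - q)) := by
  constructor
  · intro x ⟨hxt, hxnull⟩
    refine ⟨by linarith, ?_⟩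
    calc dist x.2 q.2 ≤ dist x.2 q'.2 + dist q'.2 q.2 := dist_triangle _ _ _
      _ = q.1 - x.1 := by rw [hxnull, hq'null]; ring
  · intro x ⟨hxt, hxnull⟩ ⟨hxt2, hxnull2⟩
    have heq : dist x.2 q'.2 + dist q'.2 q.2 = dist x.2 q.2 := by
      rw [hxnull, hq'null, hxnull2]; ring
    have hseg : q'.2 ∈ segment ℝ x.2 q.2 := (dist_add_dist_eq_iff.mp heq).mem_segment
    obtain ⟨a, b, ha, hb, hab, habq⟩ := hseg
    -- q'.2 - q.2 = a • (x.2 - q.2)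
    have hdiff : q'.2 - q.2 = a • (x.2 - q.2) := by
      have hb' : b = 1 - a := by linarith
      rw [← habq, hb']
      module
    have hane : a ≠ 0 := by
      intro h0
      have : q'.2 = q.2 := by
        have := hdiff
        rw [h0, zero_smul] at this
        have := sub_eq_zero.mp this
        exact this
      rw [this, dist_self] at hq'null
      linarith
    refine ⟨a⁻¹, ?_⟩
    have hfst : x.1 = q.1 + a⁻¹ * (q'.1 - q.1) := by
      have hda : dist q'.2 q.2 = a * dist x.2 q.2 := by
        rw [dist_eq_norm, dist_eq_norm, hdiff]
        rw [norm_smul, Real.norm_eq_abs, abs_of_nonneg ha]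
      rw [hq'null, hxnull2] at hda
      field_simp
      nlinarith
    have hsnd : x.2 = q.2 + a⁻¹ • (q'.2 - q.2) := by
      rw [hdiff, smul_smul, inv_mul_cancel₀ hane, one_smul]
      abel
    refine Prod.ext ?_ ?_
    · simpa using hfst
    · simpa using hsnd
end

section
/- In the 3-worldline history space ℝ³, the region FFF is empty for any 2IR satisfying the locality condition F_kj ∘ F_ji ≥ F_ki: there is no triple (λ_1, λ_2, λ_3) with λ_2 > F_21(λ_1), λ_3 > F_32(λ_2), and λ_1 > F_13(λ_3). -/
/-- The region FFF of the 3-worldline history space is empty under the future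
Escher/locality condition F_13 ∘ F_32 ∘ F_21 ≥ id. -/
theorem stmt_11 (F21 F32 F13 : ℝ → ℝ)
    (hF21 : StrictMono F21) (hF32 : StrictMono F32) (hF13 : StrictMono F13)
    (hloc : ∀ l : ℝ, F13 (F32 (F21 l)) ≥ l) :
    ¬ ∃ l1 l2 l3 : ℝ, l2 > F21 l1 ∧ l3 > F32 l2 ∧ l1 > F13 l3 := by
  rintro ⟨l1, l2, l3, h1, h2, h3⟩
  have := hloc l1
  have h4 : F32 (F21 l1) < F32 l2 := hF32 h1
  have h5 : F13 (F32 (F21 l1)) < F13 l3 := hF13 (h4.trans h2)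
  linarith
end
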